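/- arXiv:1011.3208 — 2 statements merged into one kernel-verified Lean document; each statement's English description precedes it below -/
import Mathlib

section
/- Let G = (V, E) be a finite simple graph that is generically locally rigid in ℝ^d, let U ⊆ V with |U| ≥ d, and let G' be the graph obtained from G by adding one new vertex v₀ ∉ V together with the edges {v₀ u : u ∈ U}. Then G' is generically locally rigid in ℝ^d. -/
open scoped Classical

noncomputable section

/-- Two configurations are equivalent if corresponding edge lengths agree. -/
def Equivalent {d : ℕ} {V : Type*} (G : SimpleGraph V)
    (p q : V → EuclideanSpace ℝ (Fin d)) : Prop :=
  ∀ u v, G.Adj u v → ‖p u - p v‖ = ‖q u - q v‖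

/-- Two configurations are congruent if all pairwise distances agree. -/
def Congruent' {d : ℕ} {V : Type*} (p q : V → EuclideanSpace ℝ (Fin d)) : Prop :=
  ∀ u v, ‖p u - p v‖ = ‖q u - q v‖

/-- A configuration is generic if the coordinates of its points are
algebraically independent over `ℚ`. -/
def Generic {d : ℕ} {V : Type*} (p : V → EuclideanSpace ℝ (Fin d)) : Prop :=
  AlgebraicIndependent ℚ (fun x : V × Fin d => p x.1 x.2)

/-- A framework `(G, p)` is locally rigid if all equivalent configurations
sufficiently close to `p` are congruent to `p`. -/
def LocallyRigid {d : ℕ} {V : Type*} (G : SimpleGraph V)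
    (p : V → EuclideanSpace ℝ (Fin d)) : Prop :=
  ∃ ε > 0, ∀ q, Equivalent G p q → (∀ v, ‖q v - p v‖ < ε) → Congruent' p q

/-- Generic local rigidity in `ℝ^d`. -/
def GLR (d : ℕ) {V : Type*} (G : SimpleGraph V) : Prop :=
  ∀ p : V → EuclideanSpace ℝ (Fin d), Generic p → LocallyRigid G p

/-- Generic global rigidity in `ℝ^d`. -/
def GGR (d : ℕ) {V : Type*} (G : SimpleGraph V) : Prop :=
  ∀ p : V → EuclideanSpace ℝ (Fin d), Generic p →
    ∀ q, Equivalent G p q → Congruent' p q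

/-- Generic redundant rigidity in `ℝ^d`: deleting any edge leaves a GLR graph. -/
def GRR (d : ℕ) {V : Type*} (G : SimpleGraph V) : Prop :=
  ∀ e ∈ G.edgeSet, GLR d (G.deleteEdges {e})

/-- `G` is `k`-connected: at least `k+1` vertices, and removing any at most
`k-1` vertices leaves a connected induced subgraph. -/
def KConnected (k : ℕ) {V : Type*} [Fintype V] (G : SimpleGraph V) : Prop :=
  k + 1 ≤ Fintype.card V ∧
    ∀ S : Finset V, S.card ≤ k - 1 → (G.induce ((↑S : Set V)ᶜ)).Connected

/-- The join `G + H` of two graphs: all edges of `G`, all edges of `H`, and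
all cross edges. -/
def graphJoin {α β : Type*} (G : SimpleGraph α) (H : SimpleGraph β) :
    SimpleGraph (α ⊕ β) :=
  SimpleGraph.fromRel (fun x y =>
    (∃ a b, x = Sum.inl a ∧ y = Sum.inl b ∧ G.Adj a b) ∨
    (∃ a b, x = Sum.inr a ∧ y = Sum.inr b ∧ H.Adj a b) ∨
    (x.isLeft ∧ y.isRight))

/-- The disjoint union `G ∪ H` of two graphs. -/
def disjUnion {α β : Type*} (G : SimpleGraph α) (H : SimpleGraph β) :
    SimpleGraph (α ⊕ β) :=
  SimpleGraph.fromRel (fun x y =>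
    (∃ a b, x = Sum.inl a ∧ y = Sum.inl b ∧ G.Adj a b) ∨
    (∃ a b, x = Sum.inr a ∧ y = Sum.inr b ∧ H.Adj a b))

/-- Apply a `d × d` matrix to a point of `ℝ^d`. -/
def matApply {d : ℕ} (A : Matrix (Fin d) (Fin d) ℝ)
    (x : EuclideanSpace ℝ (Fin d)) : EuclideanSpace ℝ (Fin d) :=
  WithLp.toLp 2 (fun i => ∑ j, A i j * x j)

/-- An infinitesimal motion of a framework. -/
def IsInfinitesimalMotion {d : ℕ} {V : Type*} (G : SimpleGraph V)
    (p p' : V → EuclideanSpace ℝ (Fin d)) : Prop :=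
  ∀ u v, G.Adj u v → inner ℝ (p u - p v) (p' u - p' v) = (0 : ℝ)

/-- A trivial motion: `p' v = S (p v) + b` for a skew-symmetric matrix `S`. -/
def IsTrivialMotion {d : ℕ} {V : Type*}
    (p p' : V → EuclideanSpace ℝ (Fin d)) : Prop :=
  ∃ (S : Matrix (Fin d) (Fin d) ℝ) (b : EuclideanSpace ℝ (Fin d)),
    S.transpose = -S ∧ ∀ v, p' v = matApply S (p v) + b

/-- A framework is infinitesimally rigid if every infinitesimal motion is trivial. -/
def InfinitesimallyRigid {d : ℕ} {V : Type*} (G : SimpleGraph V)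
    (p : V → EuclideanSpace ℝ (Fin d)) : Prop :=
  ∀ p', IsInfinitesimalMotion G p p' → IsTrivialMotion p p'

/-- An equilibrium stress: a real number on each edge (zero off edges) with the
equilibrium condition at each vertex. -/
def IsEquilibriumStress {d : ℕ} {V : Type*} [Fintype V] (G : SimpleGraph V)
    (p : V → EuclideanSpace ℝ (Fin d)) (ω : Sym2 V → ℝ) : Prop :=
  (∀ e, e ∉ G.edgeSet → ω e = 0) ∧
  ∀ v, ∑ u ∈ G.neighborFinset v, ω s(u, v) • (p v - p u) = 0

/-- The point `x` lies on the quadric `(A, c, D)`: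
`xᵀ A x + 2⟨c, x⟩ + D = 0`. -/
def OnQuadric {d : ℕ} (A : Matrix (Fin d) (Fin d) ℝ) (c : EuclideanSpace ℝ (Fin d))
    (D : ℝ) (x : EuclideanSpace ℝ (Fin d)) : Prop :=
  (∑ i, ∑ j, x i * A i j * x j) + 2 * (∑ i, c i * x i) + D = 0

/-- The polarized quadric constraint for a pair of points:
`xᵀ A y + ⟨c, x + y⟩ + D = 0`. -/
def PolarConstraint {d : ℕ} (A : Matrix (Fin d) (Fin d) ℝ)
    (c : EuclideanSpace ℝ (Fin d)) (D : ℝ) (x y : EuclideanSpace ℝ (Fin d)) : Prop :=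
  (∑ i, ∑ j, x i * A i j * y j) + (∑ i, c i * (x i + y i)) + D = 0

/-- Add one new vertex (`none`) to `G`, adjacent exactly to the vertices of `U`. -/
def addVertex {V : Type*} (G : SimpleGraph V) (U : Finset V) : SimpleGraph (Option V) :=
  SimpleGraph.fromRel (fun x y =>
    (∃ u v, x = some u ∧ y = some v ∧ G.Adj u v) ∨
    (∃ u, x = none ∧ y = some u ∧ u ∈ U))


/-!
Fix `d` vertices `u₀, …, u_{d-1}` of `U` and a generic `p`. For `q` equivalent to `p` and close
to it, the rigidity of `G` makes `q` congruent to `p` on `V`. The points `p uᵢ` are affinely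
independent, so they span an affine hyperplane `H`, and the distances from two points `x, z` to
the `p uᵢ` determine `‖x - z‖` up to reflecting `x` in `H`. Hence `‖q none - q v‖²` is either
`‖p none - p v‖²` or `2 L - ‖p none - p v‖²`, for some `L` depending on `p` only, and for `q`
close enough to `p` it must be the first.
-/

open Module Submodule Filter Topology
open scoped RealInnerProductSpace

section OrthogonalProjection

variable {E : Type*} [NormedAddCommGroup E] [InnerProductSpace ℝ E]

theorem real_inner_sq_eq_of_finrank_le_one {K : Submodule ℝ E} [FiniteDimensional ℝ K]
    (hK : finrank ℝ K ≤ 1) {u v : E} (hu : u ∈ K) (hv : v ∈ K) :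
    ⟪u, v⟫ ^ 2 = ‖u‖ ^ 2 * ‖v‖ ^ 2 := by
  obtain ⟨b, hb⟩ := finrank_le_one_iff.1 hK
  obtain ⟨s, hs⟩ := hb ⟨u, hu⟩
  obtain ⟨t, ht⟩ := hb ⟨v, hv⟩
  obtain rfl : s • (b : E) = u := congrArg Subtype.val hs
  obtain rfl : t • (b : E) = v := congrArg Subtype.val ht
  rw [real_inner_smul_left, real_inner_smul_right, real_inner_self_eq_norm_sq, norm_smul,
    norm_smul, Real.norm_eq_abs, Real.norm_eq_abs]
  simp only [mul_pow, sq_abs]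
  ring

theorem real_inner_sub_starProjection (K : Submodule ℝ E) [K.HasOrthogonalProjection] (x z : E) :
    ⟪x - K.starProjection x, z - K.starProjection z⟫ =
      ⟪x, z⟫ - ⟪K.starProjection x, K.starProjection z⟫ := by
  have hx := K.starProjection_inner_eq_zero x _ (K.starProjection_apply_mem z)
  have hz := K.starProjection_inner_eq_zero z _ (K.starProjection_apply_mem x)
  rw [real_inner_comm] at hz
  simp only [inner_sub_left, inner_sub_right] at hx hz ⊢
  linarith

theorem norm_sub_starProjection_sq (K : Submodule ℝ E) [K.HasOrthogonalProjection] (x : E) :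
    ‖x - K.starProjection x‖ ^ 2 = ‖x‖ ^ 2 - ‖K.starProjection x‖ ^ 2 := by
  simpa only [real_inner_self_eq_norm_sq] using real_inner_sub_starProjection K x x

/-- In codimension one the component orthogonal to `K` is a multiple of a fixed vector, so
Cauchy–Schwarz is an equality for it. -/
theorem real_inner_sub_inner_starProjection_sq [FiniteDimensional ℝ E] (K : Submodule ℝ E)
    (hK : finrank ℝ E ≤ finrank ℝ K + 1) (x z : E) :
    (⟪x, z⟫ - ⟪K.starProjection x, K.starProjection z⟫) ^ 2 =
      (‖x‖ ^ 2 - ‖K.starProjection x‖ ^ 2) * (‖z‖ ^ 2 - ‖K.starProjection z‖ ^ 2) := by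
  rw [← real_inner_sub_starProjection, ← norm_sub_starProjection_sq, ← norm_sub_starProjection_sq]
  refine real_inner_sq_eq_of_finrank_le_one ?_ (K.sub_starProjection_mem_orthogonal x)
    (K.sub_starProjection_mem_orthogonal z)
  have := K.finrank_add_finrank_orthogonal
  omega

end OrthogonalProjection

section GramData

variable {E : Type*} [NormedAddCommGroup E] [InnerProductSpace ℝ E]
  {ι : Type*} [Fintype ι] {w w' : ι → E}

theorem real_inner_linearCombination_left (w : ι → E) (c : ι → ℝ) (y : E) :
    ⟪Fintype.linearCombination ℝ w c, y⟫ = ∑ i, c i * ⟪w i, y⟫ := by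
  simp only [Fintype.linearCombination_apply, sum_inner, real_inner_smul_left]

theorem real_inner_linearCombination_eq (hw : ∀ i j, ⟪w i, w j⟫ = ⟪w' i, w' j⟫)
    (c d : ι → ℝ) :
    ⟪Fintype.linearCombination ℝ w c, Fintype.linearCombination ℝ w d⟫ =
      ⟪Fintype.linearCombination ℝ w' c, Fintype.linearCombination ℝ w' d⟫ := by
  simp only [Fintype.linearCombination_apply, sum_inner, inner_sum, real_inner_smul_left,
    real_inner_smul_right, hw]

theorem finrank_span_eq_of_real_inner_eq (hw : ∀ i j, ⟪w i, w j⟫ = ⟪w' i, w' j⟫) :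
    finrank ℝ (span ℝ (Set.range w)) = finrank ℝ (span ℝ (Set.range w')) := by
  have hker : LinearMap.ker (Fintype.linearCombination ℝ w) =
      LinearMap.ker (Fintype.linearCombination ℝ w') := by
    ext c
    rw [LinearMap.mem_ker, LinearMap.mem_ker, ← inner_self_eq_zero (𝕜 := ℝ),
      ← inner_self_eq_zero (𝕜 := ℝ) (x := Fintype.linearCombination ℝ w' c),
      real_inner_linearCombination_eq hw]
  have h := (Fintype.linearCombination ℝ w).finrank_range_add_finrank_ker
  have h' := (Fintype.linearCombination ℝ w').finrank_range_add_finrank_ker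
  rw [Fintype.range_linearCombination] at h h'
  rw [hker] at h
  omega

theorem starProjection_span_eq_of_real_inner_eq [FiniteDimensional ℝ E]
    (hw : ∀ i j, ⟪w i, w j⟫ = ⟪w' i, w' j⟫) {x x' : E} (hx : ∀ i, ⟪w i, x⟫ = ⟪w' i, x'⟫) {c : ι → ℝ}
    (hc : (span ℝ (Set.range w)).starProjection x = Fintype.linearCombination ℝ w c) :
    (span ℝ (Set.range w')).starProjection x' = Fintype.linearCombination ℝ w' c := by
  rw [← Fintype.range_linearCombination] at hc ⊢
  refine eq_starProjection_of_mem_of_inner_eq_zero ⟨c, rfl⟩ ?_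
  rintro _ ⟨d, rfl⟩
  have hxd := (LinearMap.range (Fintype.linearCombination ℝ w)).starProjection_inner_eq_zero x _
    ⟨d, rfl⟩
  rw [hc] at hxd
  rw [real_inner_comm, inner_sub_right, real_inner_linearCombination_eq hw] at hxd
  rw [real_inner_comm, inner_sub_right]
  simpa only [real_inner_linearCombination_left, hx] using hxd

theorem real_inner_starProjection_span_eq [FiniteDimensional ℝ E]
    (hw : ∀ i j, ⟪w i, w j⟫ = ⟪w' i, w' j⟫) {x x' z z' : E} (hx : ∀ i, ⟪w i, x⟫ = ⟪w' i, x'⟫)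
    (hz : ∀ i, ⟪w i, z⟫ = ⟪w' i, z'⟫) :
    ⟪(span ℝ (Set.range w)).starProjection x, (span ℝ (Set.range w)).starProjection z⟫ =
      ⟪(span ℝ (Set.range w')).starProjection x', (span ℝ (Set.range w')).starProjection z'⟫ := by
  obtain ⟨c, hc⟩ : (span ℝ (Set.range w)).starProjection x ∈
      LinearMap.range (Fintype.linearCombination ℝ w) := by
    rw [Fintype.range_linearCombination]; exact starProjection_apply_mem _ x
  obtain ⟨d, hd⟩ : (span ℝ (Set.range w)).starProjection z ∈
      LinearMap.range (Fintype.linearCombination ℝ w) := by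
    rw [Fintype.range_linearCombination]; exact starProjection_apply_mem _ z
  rw [← hc, ← hd, starProjection_span_eq_of_real_inner_eq hw hx hc.symm,
    starProjection_span_eq_of_real_inner_eq hw hz hd.symm, real_inner_linearCombination_eq hw]

end GramData

section Reflection

variable {E : Type*} [NormedAddCommGroup E] [InnerProductSpace ℝ E]

theorem real_inner_sub_sub_eq_of_norm_sub_eq {a b c a' b' c' : E} (hac : ‖a - c‖ = ‖a' - c'‖)
    (hbc : ‖b - c‖ = ‖b' - c'‖) (hab : ‖a - b‖ = ‖a' - b'‖) :
    ⟪a - c, b - c⟫ = ⟪a' - c', b' - c'⟫ := by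
  rw [real_inner_eq_norm_mul_self_add_norm_mul_self_sub_norm_sub_mul_self_div_two,
    real_inner_eq_norm_mul_self_add_norm_mul_self_sub_norm_sub_mul_self_div_two,
    sub_sub_sub_cancel_right, sub_sub_sub_cancel_right, hac, hbc, hab]

theorem exists_abs_norm_sub_sq_sub_eq [FiniteDimensional ℝ E] {ι : Type*} [Fintype ι]
    [Nonempty ι] (a : ι → E) (ha : finrank ℝ E ≤ finrank ℝ (vectorSpan ℝ (Set.range a)) + 1)
    (x z : E) :
    ∃ L : ℝ, ∀ (a' : ι → E) (x' z' : E), (∀ i j, ‖a' i - a' j‖ = ‖a i - a j‖) →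
      (∀ i, ‖x' - a' i‖ = ‖x - a i‖) → (∀ i, ‖z' - a' i‖ = ‖z - a i‖) →
      |‖x' - z'‖ ^ 2 - L| = |‖x - z‖ ^ 2 - L| := by
  obtain ⟨i₀⟩ := ‹Nonempty ι›
  rw [vectorSpan_range_eq_span_range_vsub_right ℝ a i₀] at ha
  simp only [vsub_eq_sub] at ha
  set W := span ℝ (Set.range fun i => a i - a i₀)
  set X := x - a i₀
  set Z := z - a i₀
  set L := ‖X‖ ^ 2 + ‖Z‖ ^ 2 - 2 * ⟪W.starProjection X, W.starProjection Z⟫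
  suffices key : ∀ (a' : ι → E) (x' z' : E), (∀ i j, ‖a' i - a' j‖ = ‖a i - a j‖) →
      (∀ i, ‖x' - a' i‖ = ‖x - a i‖) → (∀ i, ‖z' - a' i‖ = ‖z - a i‖) →
      (‖x' - z'‖ ^ 2 - L) ^ 2 =
        4 * ((‖X‖ ^ 2 - ‖W.starProjection X‖ ^ 2) * (‖Z‖ ^ 2 - ‖W.starProjection Z‖ ^ 2)) by
    refine ⟨L, fun a' x' z' haa hx hz => ?_⟩
    rw [← sq_eq_sq_iff_abs_eq_abs, key a' x' z' haa hx hz,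
      key a x z (fun _ _ => rfl) (fun _ => rfl) (fun _ => rfl)]
  intro a' x' z' haa hx hz
  set W' := span ℝ (Set.range fun i => a' i - a' i₀)
  have hw : ∀ i j, ⟪a i - a i₀, a j - a i₀⟫ = ⟪a' i - a' i₀, a' j - a' i₀⟫ := fun i j =>
    real_inner_sub_sub_eq_of_norm_sub_eq (haa i i₀).symm (haa j i₀).symm (haa i j).symm
  have hX : ∀ i, ⟪a i - a i₀, X⟫ = ⟪a' i - a' i₀, x' - a' i₀⟫ := fun i =>
    real_inner_sub_sub_eq_of_norm_sub_eq (haa i i₀).symm (hx i₀).symm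
      (by rw [norm_sub_rev, ← hx i, norm_sub_rev])
  have hZ : ∀ i, ⟪a i - a i₀, Z⟫ = ⟪a' i - a' i₀, z' - a' i₀⟫ := fun i =>
    real_inner_sub_sub_eq_of_norm_sub_eq (haa i i₀).symm (hz i₀).symm
      (by rw [norm_sub_rev, ← hz i, norm_sub_rev])
  have hW' : finrank ℝ E ≤ finrank ℝ W' + 1 := finrank_span_eq_of_real_inner_eq hw ▸ ha
  have hPXZ := real_inner_starProjection_span_eq hw hX hZ
  have hPX := real_inner_starProjection_span_eq hw hX hX
  have hPZ := real_inner_starProjection_span_eq hw hZ hZ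
  rw [real_inner_self_eq_norm_sq, real_inner_self_eq_norm_sq] at hPX hPZ
  have hsq := real_inner_sub_inner_starProjection_sq W' hW' (x' - a' i₀) (z' - a' i₀)
  rw [← hPXZ, ← hPX, ← hPZ, hx i₀, hz i₀] at hsq
  rw [← sub_sub_sub_cancel_right x' z' (a' i₀), norm_sub_sq_real, hx i₀, hz i₀, ← hsq]
  ring

end Reflection

section Configurations

variable {d : ℕ} {V : Type*}

theorem Generic.comp {ι : Type*} {p : V → EuclideanSpace ℝ (Fin d)} (hp : Generic p)
    {f : ι → V} (hf : Function.Injective f) : Generic (p ∘ f) :=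
  AlgebraicIndependent.comp hp (Prod.map f id) (hf.prodMap Function.injective_id)

/-- The coordinate matrix of `d` generic points of `ℝ^d` is the evaluation of the generic matrix
`mvPolynomialX` at algebraically independent entries, so its determinant does not vanish. -/
theorem Generic.linearIndependent {p : Fin d → EuclideanSpace ℝ (Fin d)} (hp : Generic p) :
    LinearIndependent ℝ p := by
  have hdet : (Matrix.of fun i j => p i j).det ≠ 0 := by
    rw [← Matrix.mvPolynomialX_mapMatrix_aeval ℚ (Matrix.of fun i j => p i j), ← AlgHom.map_det]
    exact (map_ne_zero_iff _ hp).2 (Matrix.det_mvPolynomialX_ne_zero _ _)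
  exact LinearIndependent.of_comp (WithLp.linearEquiv 2 ℝ (Fin d → ℝ)).toLinearMap
    (Matrix.linearIndependent_rows_of_det_ne_zero hdet)

theorem Generic.finrank_le_finrank_vectorSpan {p : V → EuclideanSpace ℝ (Fin d)} (hp : Generic p)
    {e : Fin d → V} (he : Function.Injective e) :
    finrank ℝ (EuclideanSpace ℝ (Fin d)) ≤ finrank ℝ (vectorSpan ℝ (Set.range (p ∘ e))) + 1 := by
  rcases d with _ | m
  · simp
  rw [(hp.comp he).linearIndependent.affineIndependent.finrank_vectorSpan (Fintype.card_fin _),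
    finrank_euclideanSpace_fin]

end Configurations

theorem eventually_eq_of_abs_sub_eq (b L : ℝ) : ∀ᶠ t in 𝓝 b, |t - L| = |b - L| → t = b := by
  by_cases hb : b = L
  · subst hb
    exact Eventually.of_forall fun t ht => by simpa [sub_eq_zero] using ht
  · have hrefl : b ≠ 2 * L - b := fun h => hb (by linarith)
    filter_upwards [eventually_ne_nhds hrefl] with t ht h
    rcases abs_eq_abs.1 h with h | h
    · linarith
    · exact absurd (by linarith) ht

section Frameworks

variable {d : ℕ} {V : Type*}

theorem locallyRigid_iff_eventually [Fintype V] {G : SimpleGraph V}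
    {p : V → EuclideanSpace ℝ (Fin d)} :
    LocallyRigid G p ↔ ∀ᶠ q in 𝓝 p, Equivalent G p q → Congruent' p q := by
  rw [LocallyRigid, Metric.eventually_nhds_iff]
  refine exists_congr fun ε => and_congr_right fun hε => forall_congr' fun q => ?_
  rw [dist_pi_lt_iff hε]
  simp only [dist_eq_norm]
  exact Imp.swap

theorem addVertex_adj_some {G : SimpleGraph V} (U : Finset V) {u v : V} (h : G.Adj u v) :
    (addVertex G U).Adj (some u) (some v) :=
  (SimpleGraph.fromRel_adj _ _ _).2 ⟨by simp [h.ne], Or.inl (Or.inl ⟨u, v, rfl, rfl, h⟩)⟩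

theorem addVertex_adj_none (G : SimpleGraph V) {U : Finset V} {u : V} (hu : u ∈ U) :
    (addVertex G U).Adj none (some u) :=
  (SimpleGraph.fromRel_adj _ _ _).2 ⟨by simp, Or.inl (Or.inr ⟨u, rfl, rfl, hu⟩)⟩

theorem Equivalent.comp_some {G : SimpleGraph V} {U : Finset V}
    {p q : Option V → EuclideanSpace ℝ (Fin d)} (h : Equivalent (addVertex G U) p q) :
    Equivalent G (p ∘ some) (q ∘ some) :=
  fun _ _ huv => h _ _ (addVertex_adj_some U huv)

theorem congruent'_of_comp_some {p q : Option V → EuclideanSpace ℝ (Fin d)}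
    (h : Congruent' (p ∘ some) (q ∘ some))
    (hnone : ∀ v, ‖p none - p (some v)‖ = ‖q none - q (some v)‖) : Congruent' p q
  | none, none => by simp
  | none, some v => hnone v
  | some u, none => by rw [norm_sub_rev, hnone u, norm_sub_rev]
  | some u, some v => h u v

end Frameworks

/-- Proposition: adding a new vertex joined to at least `d` vertices of a
generically locally rigid graph in `ℝ^d` yields a generically locally rigid graph. -/
theorem add_vertex_GLR {V : Type*} [Fintype V] (d : ℕ) (G : SimpleGraph V)
    (hG : GLR d G) (U : Finset V) (hU : d ≤ U.card) :
    GLR d (addVertex G U) := by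
  intro p hp
  rcases d with _ | m
  · exact ⟨1, one_pos, fun q _ _ u v => by rw [Subsingleton.elim (p u - p v) (q u - q v)]⟩
  set e : Fin (m + 1) → V := fun i => U.equivFin.symm (Fin.castLE hU i)
  have he : Function.Injective e :=
    Subtype.val_injective.comp (U.equivFin.symm.injective.comp (Fin.castLE_injective hU))
  have hsome : Generic (p ∘ some) := hp.comp (Option.some_injective V)
  choose L hL using fun v => exists_abs_norm_sub_sq_sub_eq ((p ∘ some) ∘ e)
    (hsome.finrank_le_finrank_vectorSpan he) (p none) (p (some v))
  rw [locallyRigid_iff_eventually]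
  filter_upwards [(continuous_pi fun v => continuous_apply (some v)).continuousAt.eventually
      (locallyRigid_iff_eventually.1 (hG _ hsome)),
    eventually_all.2 fun v => (by fun_prop : Continuous fun q : Option V → _ =>
      ‖q none - q (some v)‖ ^ 2).continuousAt.eventually (eventually_eq_of_abs_sub_eq _ (L v))]
    with q hrest hnone hq
  have hV := hrest hq.comp_some
  refine congruent'_of_comp_some hV fun v => ?_
  have hU' : ∀ i, ‖q none - q (some (e i))‖ = ‖p none - p (some (e i))‖ := fun i =>
    (hq _ _ (addVertex_adj_none G (U.equivFin.symm _).2)).symm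
  have hsq := hnone v (hL v ((q ∘ some) ∘ e) (q none) (q (some v)) (fun i j => (hV _ _).symm) hU'
    (fun i => (hV _ _).symm))
  exact (sq_eq_sq₀ (norm_nonneg _) (norm_nonneg _)).1 hsq.symm

end
end

section
/- Let d ≥ 1 and let G + H be a joined graph that is balanced in dimension d (|V_G|, |V_H| ≥ d+1), and let p be a generic configuration of G + H in ℝ^d. Then the framework (G + H, p) is infinitesimally rigid if and only if there is no quadric (A, c, D) ≠ 0 (A a symmetric d×d real matrix, c ∈ ℝ^d, D ∈ ℝ, not all zero) such that every point p v lies on the quadric (i.e., (p v)ᵀ A (p v) + 2⟨c, p v⟩ + D = 0 for all vertices v) and such that for every extraneous edge uv (an edge of G or of H), (p u)ᵀ A (p v) + ⟨c, p u + p v⟩ + D = 0. (Equivalently: the quadric rigidity matrix of the joined framework has full rank (d+2 choose 2) if and only if the framework is infinitesimally rigid.) -/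
open scoped Classical

noncomputable section

/-!
A quadric `(A, c, D)` through all the points gives the infinitesimal motion `z ↦ A z + c` on the
`G`-side and `z ↦ -(A z + c)` on the `H`-side: the cross edges are respected because the points
lie on the quadric, the extraneous edges because of the polar constraints, and the motion is
trivial only for the zero quadric. Conversely, the four cross edges of each 4-cycle `a b a' b'`
force any infinitesimal motion to be `z ↦ M z + e` on one side and `z ↦ -Mᵀ z + f` on the other,
as soon as both sides affinely span `ℝ^d` (which `d + 1` generic points do). Splitting `M` into
its skew and symmetric parts writes the motion as a trivial motion plus the motion of a quadric
satisfying all the constraints.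
-/

open Matrix

section LinearAlgebra

variable {K : Type*} [Field K] {ι κ m n : Type*} [Fintype n]

theorem eq_zero_of_dotProduct_eq_zero_of_span_eq_top {s : Set (n → K)}
    (hs : Submodule.span K s = ⊤) {v : n → K} (h : ∀ w ∈ s, v ⬝ᵥ w = 0) : v = 0 := by
  have hker : Submodule.span K s ≤ LinearMap.ker (dotProductBilin K K v) :=
    Submodule.span_le.2 h
  rw [hs] at hker
  exact dotProduct_eq_zero_iff.1 fun w => hker Submodule.mem_top

theorem eq_zero_of_dotProduct_sub_eq_zero {x : ι → n → K}
    (hx : vectorSpan K (Set.range x) = ⊤) {v : n → K} (h : ∀ i j, v ⬝ᵥ (x i - x j) = 0) :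
    v = 0 := by
  rw [vectorSpan_def] at hx
  refine eq_zero_of_dotProduct_eq_zero_of_span_eq_top hx ?_
  rintro _ ⟨_, ⟨i, rfl⟩, _, ⟨j, rfl⟩, rfl⟩
  exact h i j

theorem Matrix.eq_zero_of_mulVec_sub_eq_zero {y : κ → n → K}
    (hy : vectorSpan K (Set.range y) = ⊤) {T : Matrix m n K}
    (h : ∀ j j', T *ᵥ (y j - y j') = 0) : T = 0 := by
  ext k l
  have hrow : T k = 0 :=
    eq_zero_of_dotProduct_sub_eq_zero hy fun j j' => congrFun (h j j') k
  exact congrFun hrow l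

theorem Matrix.eq_zero_of_dotProduct_mulVec_sub_eq_zero [Fintype m] {x : ι → m → K}
    {y : κ → n → K} (hx : vectorSpan K (Set.range x) = ⊤) (hy : vectorSpan K (Set.range y) = ⊤)
    {T : Matrix m n K} (h : ∀ i i' j j', (x i - x i') ⬝ᵥ T *ᵥ (y j - y j') = 0) : T = 0 :=
  Matrix.eq_zero_of_mulVec_sub_eq_zero hy fun j j' =>
    eq_zero_of_dotProduct_sub_eq_zero hx fun i i' => by
      rw [dotProduct_comm]
      exact h i i' j j'

theorem exists_mulVec_eq_of_dotProduct_eq [Fintype m] [DecidableEq m] {b : κ → n → K}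
    {z : κ → m → K}
    (hb : Submodule.span K (Set.range b) = ⊤) {x : ι → m → K} {u : ι → n → K}
    (h : ∀ i k, b k ⬝ᵥ u i = z k ⬝ᵥ x i) : ∃ M : Matrix n m K, ∀ i, u i = M *ᵥ x i := by
  have hinj : LinearMap.ker (Matrix.of b).mulVecLin = ⊥ := by
    refine LinearMap.ker_eq_bot'.2 fun v hv => ?_
    refine eq_zero_of_dotProduct_eq_zero_of_span_eq_top hb ?_
    rintro _ ⟨k, rfl⟩
    rw [dotProduct_comm]
    exact congrFun hv k
  obtain ⟨L, hL⟩ := (Matrix.of b).mulVecLin.exists_leftInverse_of_injective hinj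
  refine ⟨LinearMap.toMatrix' (L ∘ₗ (Matrix.of z).mulVecLin), fun i => ?_⟩
  have hbz : (Matrix.of b).mulVecLin (u i) = (Matrix.of z).mulVecLin (x i) :=
    funext (h i)
  rw [LinearMap.toMatrix'_mulVec, LinearMap.comp_apply, ← hbz, ← LinearMap.comp_apply, hL,
    LinearMap.id_apply]

theorem exists_affine_of_dotProduct_sub_eq_zero [DecidableEq n] {α β : Type*} [Nonempty α]
    [Nonempty β] {x u : α → n → K} {y w : β → n → K} (hx : vectorSpan K (Set.range x) = ⊤)
    (hy : vectorSpan K (Set.range y) = ⊤) (h : ∀ a b, (x a - y b) ⬝ᵥ (u a - w b) = 0) :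
    ∃ (M : Matrix n n K) (e f : n → K),
      (∀ a, u a = M *ᵥ x a + e) ∧ ∀ b, w b = -(Mᵀ *ᵥ y b) + f := by
  obtain ⟨a₀⟩ := ‹Nonempty α›
  obtain ⟨b₀⟩ := ‹Nonempty β›
  have key : ∀ a a' b b', (x a - x a') ⬝ᵥ (w b - w b') + (y b - y b') ⬝ᵥ (u a - u a') = 0 := by
    intro a a' b b'
    have h₁ := h a b
    have h₂ := h a' b
    have h₃ := h a b'
    have h₄ := h a' b'
    simp only [sub_dotProduct, dotProduct_sub] at h₁ h₂ h₃ h₄ ⊢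
    linear_combination h₂ + h₃ - h₁ - h₄
  obtain ⟨M, hM⟩ := exists_mulVec_eq_of_dotProduct_eq (x := fun aa : α × α => x aa.1 - x aa.2)
    (u := fun aa => u aa.1 - u aa.2) (b := fun b => y b - y b₀) (z := fun b => -(w b - w b₀))
    (by simpa only [vectorSpan_range_eq_span_range_vsub_right K y b₀, vsub_eq_sub] using hy)
    fun aa b => by
      rw [neg_dotProduct, dotProduct_comm (w b - w b₀)]
      linear_combination key aa.1 aa.2 b b₀
  obtain ⟨N, hN⟩ := exists_mulVec_eq_of_dotProduct_eq (x := fun bb : β × β => y bb.1 - y bb.2)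
    (u := fun bb => w bb.1 - w bb.2) (b := fun a => x a - x a₀) (z := fun a => -(u a - u a₀))
    (by simpa only [vectorSpan_range_eq_span_range_vsub_right K x a₀, vsub_eq_sub] using hx)
    fun bb a => by
      rw [neg_dotProduct, dotProduct_comm (u a - u a₀)]
      linear_combination key a a₀ bb.1 bb.2
  have hNM : N + Mᵀ = 0 := by
    refine Matrix.eq_zero_of_dotProduct_mulVec_sub_eq_zero hx hy fun a a' b b' => ?_
    rw [add_mulVec, dotProduct_add, dotProduct_transpose_mulVec, ← hM (a, a'), ← hN (b, b')]
    exact key a a' b b'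
  refine ⟨M, u a₀ - M *ᵥ x a₀, w b₀ - N *ᵥ y b₀, fun a => ?_, fun b => ?_⟩
  · have := hM (a, a₀)
    rw [mulVec_sub] at this
    linear_combination this
  · have := hN (b, b₀)
    simp only [mulVec_sub, eq_neg_of_add_eq_zero_left hNM, neg_mulVec] at this ⊢
    linear_combination this

end LinearAlgebra

section QuadricMotion

variable {n : Type*} [Fintype n]

theorem Matrix.dotProduct_mulVec_self_eq_zero {S : Matrix n n ℝ} (hS : Sᵀ = -S) (z : n → ℝ) :
    z ⬝ᵥ S *ᵥ z = 0 := by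
  have h := dotProduct_transpose_mulVec S z z
  rw [hS, neg_mulVec, dotProduct_neg] at h
  linarith

theorem Matrix.IsSymm.sub_dotProduct_add {A : Matrix n n ℝ} (hA : A.IsSymm) (c z z' : n → ℝ) :
    (z - z') ⬝ᵥ ((A *ᵥ z + c) + (A *ᵥ z' + c)) =
      (z ⬝ᵥ A *ᵥ z + 2 * (c ⬝ᵥ z)) - (z' ⬝ᵥ A *ᵥ z' + 2 * (c ⬝ᵥ z')) := by
  have hzz' : z' ⬝ᵥ A *ᵥ z = z ⬝ᵥ A *ᵥ z' := by
    rw [← dotProduct_transpose_mulVec, hA.eq]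
  simp only [sub_dotProduct, dotProduct_sub, dotProduct_add, dotProduct_comm _ c]
  linear_combination -hzz'

theorem Matrix.IsSymm.polar_eq_zero_iff {A : Matrix n n ℝ} (hA : A.IsSymm) {c z z' : n → ℝ}
    {D : ℝ} (hz : z ⬝ᵥ A *ᵥ z + 2 * (c ⬝ᵥ z) + D = 0)
    (hz' : z' ⬝ᵥ A *ᵥ z' + 2 * (c ⬝ᵥ z') + D = 0) :
    z ⬝ᵥ A *ᵥ z' + c ⬝ᵥ (z + z') + D = 0 ↔ (z - z') ⬝ᵥ A *ᵥ (z - z') = 0 := by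
  have hzz' : z' ⬝ᵥ A *ᵥ z = z ⬝ᵥ A *ᵥ z' := by
    rw [← dotProduct_transpose_mulVec, hA.eq]
  have h : (z - z') ⬝ᵥ A *ᵥ (z - z') = -2 * (z ⬝ᵥ A *ᵥ z' + c ⬝ᵥ (z + z') + D) := by
    simp only [mulVec_sub, sub_dotProduct, dotProduct_sub, dotProduct_add]
    linear_combination hz + hz' - hzz'
  rw [h, mul_eq_zero, or_iff_right (by norm_num)]

theorem exists_skew_symm_of_dotProduct_sub_eq_zero [DecidableEq n] {α β : Type*} [Nonempty α]
    [Nonempty β] {x u : α → n → ℝ} {y w : β → n → ℝ} (hx : vectorSpan ℝ (Set.range x) = ⊤)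
    (hy : vectorSpan ℝ (Set.range y) = ⊤) (h : ∀ a b, (x a - y b) ⬝ᵥ (u a - w b) = 0) :
    ∃ (S A : Matrix n n ℝ) (b c : n → ℝ), Sᵀ = -S ∧ A.IsSymm ∧
      (∀ a, u a = S *ᵥ x a + b + (A *ᵥ x a + c)) ∧
      ∀ b', w b' = S *ᵥ y b' + b - (A *ᵥ y b' + c) := by
  obtain ⟨M, e, f, hu, hw⟩ := exists_affine_of_dotProduct_sub_eq_zero hx hy h
  refine ⟨(1 / 2 : ℝ) • (M - Mᵀ), (1 / 2 : ℝ) • (M + Mᵀ), (1 / 2 : ℝ) • (e + f),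
    (1 / 2 : ℝ) • (e - f), ?_, ?_, fun a => ?_, fun b => ?_⟩
  · rw [transpose_smul, transpose_sub, transpose_transpose, ← smul_neg, neg_sub]
  · rw [IsSymm, transpose_smul, transpose_add, transpose_transpose, add_comm]
  · rw [hu a]
    simp only [smul_mulVec, sub_mulVec, add_mulVec]
    module
  · rw [hw b]
    simp only [smul_mulVec, sub_mulVec, add_mulVec]
    module

end QuadricMotion

section Generic

variable {d : ℕ} {V : Type*} {p : V → EuclideanSpace ℝ (Fin d)}

theorem Generic.det_ne_zero (hp : Generic p) {ι : Fin (d + 1) → V} (hι : Function.Injective ι) :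
    (Matrix.of fun i j : Fin d => p (ι j.succ) i - p (ι 0) i).det ≠ 0 := by
  set P : Matrix (Fin d) (Fin d) (MvPolynomial (V × Fin d) ℚ) :=
    Matrix.of fun i j => MvPolynomial.X (ι j.succ, i) - MvPolynomial.X (ι 0, i)
  -- Placing `ι (j + 1)` at the `j`-th unit vector and every other vertex at `0` turns `P` into `1`.
  have hP : P.det ≠ 0 := by
    intro h0
    set e : V × Fin d → ℚ := fun x => if x.1 = ι x.2.succ then 1 else 0
    have he : (MvPolynomial.aeval e).mapMatrix P = 1 := by
      ext i j
      by_cases hij : i = j <;>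
        simp [P, e, Matrix.one_apply, hij, hι.eq_iff, (Fin.succ_ne_zero _).symm,
          eq_comm]
    have h1 := congrArg (MvPolynomial.aeval e) h0
    rw [AlgHom.map_det, he, det_one, map_zero] at h1
    exact one_ne_zero h1
  have hpP : (MvPolynomial.aeval fun x : V × Fin d => p x.1 x.2).mapMatrix P =
      Matrix.of fun i j : Fin d => p (ι j.succ) i - p (ι 0) i := by
    ext i j
    simp [P]
  rw [← hpP, ← AlgHom.map_det]
  exact (map_ne_zero_iff _ hp).2 hP

theorem Generic.vectorSpan_eq_top (hp : Generic p) {ι : Type*} [Fintype ι] {f : ι → V}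
    (hf : Function.Injective f) (hcard : d + 1 ≤ Fintype.card ι) :
    vectorSpan ℝ (Set.range fun i => WithLp.ofLp (p (f i))) = ⊤ := by
  obtain ⟨e⟩ : Nonempty (Fin (d + 1) ↪ ι) :=
    Function.Embedding.nonempty_of_card_le (by simpa using hcard)
  have hli := linearIndependent_cols_of_det_ne_zero (hp.det_ne_zero (hf.comp e.injective))
  rw [eq_top_iff, ← hli.span_eq_top_of_card_eq_finrank' (by simp)]
  refine Submodule.span_le.2 ?_
  rintro _ ⟨j, rfl⟩
  exact vsub_mem_vectorSpan ℝ (Set.mem_range_self _) (Set.mem_range_self _)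

end Generic

section Bridge

open WithLp

variable {d : ℕ}

theorem EuclideanSpace.real_inner_eq_dotProduct {n : Type*} [Fintype n]
    (x y : EuclideanSpace ℝ n) : inner ℝ x y = ofLp x ⬝ᵥ ofLp y := by
  rw [EuclideanSpace.inner_eq_star_dotProduct, star_trivial, dotProduct_comm]

@[simp]
theorem ofLp_matApply (A : Matrix (Fin d) (Fin d) ℝ) (x : EuclideanSpace ℝ (Fin d)) :
    ofLp (matApply A x) = A *ᵥ ofLp x :=
  rfl

theorem onQuadric_iff_dotProduct {A : Matrix (Fin d) (Fin d) ℝ} {c : EuclideanSpace ℝ (Fin d)}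
    {D : ℝ} {x : EuclideanSpace ℝ (Fin d)} :
    OnQuadric A c D x ↔ ofLp x ⬝ᵥ A *ᵥ ofLp x + 2 * (ofLp c ⬝ᵥ ofLp x) + D = 0 := by
  simp only [OnQuadric, dotProduct, mulVec, Finset.mul_sum, mul_assoc]

theorem polarConstraint_iff_dotProduct {A : Matrix (Fin d) (Fin d) ℝ} {c : EuclideanSpace ℝ (Fin d)}
    {D : ℝ} {x y : EuclideanSpace ℝ (Fin d)} :
    PolarConstraint A c D x y ↔
      ofLp x ⬝ᵥ A *ᵥ ofLp y + ofLp c ⬝ᵥ (ofLp x + ofLp y) + D = 0 := by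
  simp only [PolarConstraint, dotProduct, mulVec, Finset.mul_sum, mul_assoc, Pi.add_apply]

theorem isTrivialMotion_iff {V : Type*} {p p' : V → EuclideanSpace ℝ (Fin d)} :
    IsTrivialMotion p p' ↔
      ∃ (S : Matrix (Fin d) (Fin d) ℝ) (b : Fin d → ℝ), Sᵀ = -S ∧
        ∀ v, ofLp (p' v) = S *ᵥ ofLp (p v) + b := by
  refine ⟨fun ⟨S, b, hS, h⟩ => ⟨S, ofLp b, hS, fun v => by rw [h v]; rfl⟩,
    fun ⟨S, b, hS, h⟩ => ⟨S, toLp 2 b, hS, fun v => ofLp_injective 2 ?_⟩⟩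
  rw [h v]
  rfl

theorem isInfinitesimalMotion_add_trivial_iff {V : Type*} {G : SimpleGraph V}
    {p p' : V → EuclideanSpace ℝ (Fin d)} {S : Matrix (Fin d) (Fin d) ℝ} (hS : Sᵀ = -S)
    (b : EuclideanSpace ℝ (Fin d)) :
    IsInfinitesimalMotion G p (fun v => p' v + (matApply S (p v) + b)) ↔
      IsInfinitesimalMotion G p p' := by
  simp only [IsInfinitesimalMotion, EuclideanSpace.real_inner_eq_dotProduct, ofLp_sub, ofLp_add,
    ofLp_matApply]
  refine forall₂_congr fun u v => imp_congr_right fun _ => ?_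
  rw [show ∀ w w' z z' : Fin d → ℝ, w + (S *ᵥ z + ofLp b) - (w' + (S *ᵥ z' + ofLp b)) =
      (w - w') + S *ᵥ (z - z') from fun _ _ _ _ => by rw [mulVec_sub]; abel,
    dotProduct_add, S.dotProduct_mulVec_self_eq_zero hS, add_zero]

end Bridge

section GraphJoin

variable {α β : Type*} {G : SimpleGraph α} {H : SimpleGraph β}

@[simp]
theorem graphJoin_adj_inl_inl {a a' : α} :
    (graphJoin G H).Adj (Sum.inl a) (Sum.inl a') ↔ G.Adj a a' := by
  simpa [graphJoin, G.adj_comm a'] using fun h : G.Adj a a' => h.ne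

@[simp]
theorem graphJoin_adj_inr_inr {b b' : β} :
    (graphJoin G H).Adj (Sum.inr b) (Sum.inr b') ↔ H.Adj b b' := by
  simpa [graphJoin, H.adj_comm b'] using fun h : H.Adj b b' => h.ne

@[simp]
theorem graphJoin_adj_inl_inr (a : α) (b : β) : (graphJoin G H).Adj (Sum.inl a) (Sum.inr b) := by
  simp [graphJoin]

theorem forall_graphJoin_adj_iff {P : α ⊕ β → α ⊕ β → Prop} (hP : ∀ u v, P u v → P v u) :
    (∀ u v, (graphJoin G H).Adj u v → P u v) ↔
      (∀ a a', G.Adj a a' → P (.inl a) (.inl a')) ∧ (∀ b b', H.Adj b b' → P (.inr b) (.inr b')) ∧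
        ∀ a b, P (.inl a) (.inr b) := by
  refine ⟨fun h => ⟨fun a a' => h _ _ ∘ graphJoin_adj_inl_inl.2,
    fun b b' => h _ _ ∘ graphJoin_adj_inr_inr.2, fun a b => h _ _ (graphJoin_adj_inl_inr a b)⟩, ?_⟩
  rintro ⟨hG, hH, hGH⟩ (a | b) (a' | b') hadj
  · exact hG a a' (graphJoin_adj_inl_inl.1 hadj)
  · exact hGH a b'
  · exact hP _ _ (hGH a' b)
  · exact hH b b' (graphJoin_adj_inr_inr.1 hadj)

end GraphJoin

section Join

open WithLp

variable {d : ℕ} {α β : Type*} {G : SimpleGraph α} {H : SimpleGraph β}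
  {p : α ⊕ β → EuclideanSpace ℝ (Fin d)}

/-- `(A, c, D)` lies in the kernel of the quadric rigidity matrix of `(graphJoin G H, p)`. -/
def IsJoinQuadric (G : SimpleGraph α) (H : SimpleGraph β) (p : α ⊕ β → EuclideanSpace ℝ (Fin d))
    (A : Matrix (Fin d) (Fin d) ℝ) (c : EuclideanSpace ℝ (Fin d)) (D : ℝ) : Prop :=
  A.IsSymm ∧ (∀ v, OnQuadric A c D (p v)) ∧
    (∀ u v, G.Adj u v → PolarConstraint A c D (p (.inl u)) (p (.inl v))) ∧
    (∀ u v, H.Adj u v → PolarConstraint A c D (p (.inr u)) (p (.inr v)))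

def quadricMotion (A : Matrix (Fin d) (Fin d) ℝ) (c : EuclideanSpace ℝ (Fin d))
    (p : α ⊕ β → EuclideanSpace ℝ (Fin d)) : α ⊕ β → EuclideanSpace ℝ (Fin d) :=
  Sum.elim (fun a => matApply A (p (.inl a)) + c) (fun b => -(matApply A (p (.inr b)) + c))

theorem isInfinitesimalMotion_graphJoin_iff {p' : α ⊕ β → EuclideanSpace ℝ (Fin d)} :
    IsInfinitesimalMotion (graphJoin G H) p p' ↔
      (∀ a a', G.Adj a a' → (ofLp (p (.inl a)) - ofLp (p (.inl a'))) ⬝ᵥ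
        (ofLp (p' (.inl a)) - ofLp (p' (.inl a'))) = 0) ∧
      (∀ b b', H.Adj b b' → (ofLp (p (.inr b)) - ofLp (p (.inr b'))) ⬝ᵥ
        (ofLp (p' (.inr b)) - ofLp (p' (.inr b'))) = 0) ∧
      ∀ a b, (ofLp (p (.inl a)) - ofLp (p (.inr b))) ⬝ᵥ
        (ofLp (p' (.inl a)) - ofLp (p' (.inr b))) = 0 := by
  rw [IsInfinitesimalMotion, forall_graphJoin_adj_iff fun u v h => by
    rwa [← inner_neg_neg, neg_sub, neg_sub] at h]
  simp only [EuclideanSpace.real_inner_eq_dotProduct, ofLp_sub]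

theorem Matrix.IsSymm.polarConstraint_iff {A : Matrix (Fin d) (Fin d) ℝ} (hA : A.IsSymm)
    {c : EuclideanSpace ℝ (Fin d)} {D : ℝ} {z z' : EuclideanSpace ℝ (Fin d)}
    (hz : OnQuadric A c D z) (hz' : OnQuadric A c D z') :
    PolarConstraint A c D z z' ↔ (ofLp z - ofLp z') ⬝ᵥ A *ᵥ (ofLp z - ofLp z') = 0 := by
  rw [polarConstraint_iff_dotProduct,
    hA.polar_eq_zero_iff (onQuadric_iff_dotProduct.1 hz) (onQuadric_iff_dotProduct.1 hz')]

theorem isInfinitesimalMotion_quadricMotion_iff [Nonempty α] [Nonempty β]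
    {A : Matrix (Fin d) (Fin d) ℝ} (hA : A.IsSymm) {c : EuclideanSpace ℝ (Fin d)} :
    IsInfinitesimalMotion (graphJoin G H) p (quadricMotion A c p) ↔
      ∃ D, IsJoinQuadric G H p A c D := by
  have hflip : ∀ z z' : Fin d → ℝ, (z - z') ⬝ᵥ A *ᵥ (z' - z) = -((z' - z) ⬝ᵥ A *ᵥ (z' - z)) :=
    fun z z' => by rw [← neg_sub z' z, neg_dotProduct]
  simp only [isInfinitesimalMotion_graphJoin_iff, quadricMotion, Sum.elim_inl, Sum.elim_inr,
    ofLp_add, ofLp_neg, ofLp_matApply, add_sub_add_right_eq_sub, neg_add_eq_sub, sub_neg_eq_add,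
    ← mulVec_sub, hflip, neg_eq_zero, hA.sub_dotProduct_add, sub_eq_zero]
  constructor
  · rintro ⟨hG, hH, hGH⟩
    obtain ⟨a₀⟩ := ‹Nonempty α›
    obtain ⟨b₀⟩ := ‹Nonempty β›
    have hon : ∀ v, OnQuadric A c (-(ofLp (p (.inl a₀)) ⬝ᵥ A *ᵥ ofLp (p (.inl a₀)) +
        2 * (ofLp c ⬝ᵥ ofLp (p (.inl a₀))))) (p v) := by
      rintro (a | b) <;> rw [onQuadric_iff_dotProduct]
      · linear_combination hGH a b₀ - hGH a₀ b₀
      · linear_combination -hGH a₀ b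
    exact ⟨_, hA, hon, fun a a' h => (hA.polarConstraint_iff (hon _) (hon _)).2 (hG a a' h),
      fun b b' h => (hA.polarConstraint_iff (hon _) (hon _)).2 (hH b' b h.symm)⟩
  · rintro ⟨D, -, hon, hG, hH⟩
    refine ⟨fun a a' h => (hA.polarConstraint_iff (hon _) (hon _)).1 (hG a a' h),
      fun b b' h => (hA.polarConstraint_iff (hon _) (hon _)).1 (hH b' b h.symm), fun a b => ?_⟩
    have ha := onQuadric_iff_dotProduct.1 (hon (.inl a))
    have hb := onQuadric_iff_dotProduct.1 (hon (.inr b))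
    linear_combination ha - hb

theorem eq_zero_of_isTrivialMotion_quadricMotion [Nonempty α] [Nonempty β]
    {A : Matrix (Fin d) (Fin d) ℝ} (hA : A.IsSymm) {c : EuclideanSpace ℝ (Fin d)}
    (hx : vectorSpan ℝ (Set.range fun a => ofLp (p (.inl a))) = ⊤)
    (h : IsTrivialMotion p (quadricMotion A c p)) : A = 0 ∧ c = 0 := by
  obtain ⟨S, b, hS, hSb⟩ := isTrivialMotion_iff.1 h
  have hl : ∀ a, A *ᵥ ofLp (p (.inl a)) + ofLp c = S *ᵥ ofLp (p (.inl a)) + b := fun a => by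
    simpa [quadricMotion] using hSb (.inl a)
  have hr : ∀ b', -(A *ᵥ ofLp (p (.inr b')) + ofLp c) = S *ᵥ ofLp (p (.inr b')) + b :=
    fun b' => by simpa [quadricMotion] using hSb (.inr b')
  have hAS : A = S := sub_eq_zero.1 <| Matrix.eq_zero_of_mulVec_sub_eq_zero hx fun a a' => by
    rw [sub_mulVec, mulVec_sub, mulVec_sub]
    linear_combination hl a - hl a'
  subst hAS
  have hA0 : A = 0 := self_eq_neg (G := Fin d → Fin d → ℝ) |>.1 (hA.eq.symm.trans hS)
  subst hA0
  obtain ⟨a⟩ := ‹Nonempty α›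
  obtain ⟨b'⟩ := ‹Nonempty β›
  have hla := hl a
  have hrb := hr b'
  simp only [zero_mulVec, zero_add] at hla hrb
  rw [← hla, neg_eq_self] at hrb
  exact ⟨rfl, by simpa using hrb⟩

theorem IsJoinQuadric.eq_zero [Nonempty α] [Nonempty β] {A : Matrix (Fin d) (Fin d) ℝ}
    {c : EuclideanSpace ℝ (Fin d)} {D : ℝ} (hq : IsJoinQuadric G H p A c D)
    (hx : vectorSpan ℝ (Set.range fun a => ofLp (p (.inl a))) = ⊤)
    (hrig : InfinitesimallyRigid (graphJoin G H) p) : A = 0 ∧ c = 0 ∧ D = 0 := by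
  have hmot := (isInfinitesimalMotion_quadricMotion_iff hq.1).2 ⟨D, hq⟩
  obtain ⟨rfl, rfl⟩ := eq_zero_of_isTrivialMotion_quadricMotion hq.1 hx (hrig _ hmot)
  obtain ⟨a⟩ := ‹Nonempty α›
  simpa [onQuadric_iff_dotProduct] using hq.2.1 (.inl a)

theorem infinitesimallyRigid_graphJoin_of_forall_isJoinQuadric [Nonempty α] [Nonempty β]
    (hx : vectorSpan ℝ (Set.range fun a => ofLp (p (.inl a))) = ⊤)
    (hy : vectorSpan ℝ (Set.range fun b => ofLp (p (.inr b))) = ⊤)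
    (h : ∀ A c D, IsJoinQuadric G H p A c D → A = 0 ∧ c = 0 ∧ D = 0) :
    InfinitesimallyRigid (graphJoin G H) p := by
  intro p' hmot
  obtain ⟨-, -, hGH⟩ := isInfinitesimalMotion_graphJoin_iff.1 hmot
  obtain ⟨S, A, b, c, hS, hA, hu, hw⟩ := exists_skew_symm_of_dotProduct_sub_eq_zero hx hy hGH
  have hp' : p' = fun v => quadricMotion A (toLp 2 c) p v + (matApply S (p v) + toLp 2 b) := by
    funext v
    apply ofLp_injective 2
    rcases v with a | b' <;>
      simp only [hu, hw, quadricMotion, Sum.elim_inl, Sum.elim_inr, ofLp_add, ofLp_neg,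
        ofLp_matApply] <;>
      abel
  rw [hp', isInfinitesimalMotion_add_trivial_iff hS,
    isInfinitesimalMotion_quadricMotion_iff hA] at hmot
  obtain ⟨D, hq⟩ := hmot
  obtain ⟨rfl, hc, -⟩ := h _ _ _ hq
  rw [hp']
  exact isTrivialMotion_iff.2
    ⟨S, b, hS, fun v => by rcases v with a | b' <;> simp [quadricMotion, hc]⟩

end Join

theorem QRM_full_rank_iff_inf_rigid_general {α β : Type*} [Fintype α] [Fintype β]
    (d : ℕ) (G : SimpleGraph α) (H : SimpleGraph β)
    (hα : d + 1 ≤ Fintype.card α) (hβ : d + 1 ≤ Fintype.card β)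
    (p : α ⊕ β → EuclideanSpace ℝ (Fin d)) (hp : Generic p) :
    InfinitesimallyRigid (graphJoin G H) p ↔
      ¬ ∃ (A : Matrix (Fin d) (Fin d) ℝ) (c : EuclideanSpace ℝ (Fin d)) (D : ℝ),
          A.IsSymm ∧ (A ≠ 0 ∨ c ≠ 0 ∨ D ≠ 0) ∧
          (∀ v, OnQuadric A c D (p v)) ∧
          (∀ u v, G.Adj u v → PolarConstraint A c D (p (Sum.inl u)) (p (Sum.inl v))) ∧
          (∀ u v, H.Adj u v → PolarConstraint A c D (p (Sum.inr u)) (p (Sum.inr v))) := by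
  have : Nonempty α := Fintype.card_pos_iff.1 (by omega)
  have : Nonempty β := Fintype.card_pos_iff.1 (by omega)
  have hx := hp.vectorSpan_eq_top Sum.inl_injective hα
  have hy := hp.vectorSpan_eq_top Sum.inr_injective hβ
  refine ⟨fun hrig ⟨A, c, D, hA, hne, hq⟩ => ?_,
    fun h => infinitesimallyRigid_graphJoin_of_forall_isJoinQuadric hx hy fun A c D hq => ?_⟩
  · obtain ⟨rfl, rfl, rfl⟩ := IsJoinQuadric.eq_zero ⟨hA, hq⟩ hx hrig
    simp at hne
  · by_contra hne
    exact h ⟨A, c, D, hq.1, by tauto, hq.2⟩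

/-- Proposition: a generic framework of a balanced joined graph is
infinitesimally rigid iff no nonzero quadric satisfies all vertex constraints
and all extraneous-edge polarization constraints (i.e. the quadric rigidity
matrix has full rank `C(d+2, 2)`). -/
theorem QRM_full_rank_iff_inf_rigid {α β : Type*} [Fintype α] [Fintype β]
    (d : ℕ) (hd : 1 ≤ d) (G : SimpleGraph α) (H : SimpleGraph β)
    (hα : d + 1 ≤ Fintype.card α) (hβ : d + 1 ≤ Fintype.card β)
    (p : α ⊕ β → EuclideanSpace ℝ (Fin d)) (hp : Generic p) :
    InfinitesimallyRigid (graphJoin G H) p ↔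
      ¬ ∃ (A : Matrix (Fin d) (Fin d) ℝ) (c : EuclideanSpace ℝ (Fin d)) (D : ℝ),
          A.IsSymm ∧ (A ≠ 0 ∨ c ≠ 0 ∨ D ≠ 0) ∧
          (∀ v, OnQuadric A c D (p v)) ∧
          (∀ u v, G.Adj u v → PolarConstraint A c D (p (Sum.inl u)) (p (Sum.inl v))) ∧
          (∀ u v, H.Adj u v → PolarConstraint A c D (p (Sum.inr u)) (p (Sum.inr v))) :=
  QRM_full_rank_iff_inf_rigid_general d G H hα hβ p hp

end
end
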